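/- arXiv:1205.0446 — 2 statements merged into one kernel-verified Lean document; each statement's English description precedes it below -/
import Mathlib

section
/- Every finite or countable Menger algebra (G;o) of rank n > 1 can be isomorphically embedded into a Menger algebra (H;o') of the same rank n that is generated by a single element; i.e., there exist a Menger algebra (H;o') of rank n, an injective map ι : G → H with ι(x[y₁…yₙ]) = ι(x)[ι(y₁)…ι(yₙ)], and an element h ∈ H such that the smallest subset of H containing h and closed under the operation o' equals H (Henno's theorem). -/
universe u

/-- Superassociativity of an `(n+1)`-ary operation, written `x[y₁…yₙ]`. -/
def Superassociative {G : Type u} {n : ℕ} (o : G → (Fin n → G) → G) : Prop :=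
  ∀ (x : G) (y z : Fin n → G), o (o x y) z = o x (fun i => o (y i) z)

namespace HennoAux

variable {G : Type u} {n : ℕ}

inductive S (G : Type u) (n : ℕ) : Type u where
  | g : G → S G n
  | num : ℕ → S G n
  | tup : (Fin n → S G n) → S G n

abbrev M (G : Type u) (n : ℕ) : Type u := (Fin n → S G n) → S G n

def comp (f : M G n) (gs : Fin n → M G n) : M G n := fun a => f (fun i => gs i a)

def gpart : S G n → Option G
  | S.g x => some x
  | _ => none

def decode (a : Fin n → S G n) : Option (Fin n → G) :=
  if h : ∀ i, (gpart (a i)).isSome then some (fun i => (gpart (a i)).get (h i)) else none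

def i0 (hn : 1 < n) : Fin n := ⟨0, by omega⟩
def i1 (hn : 1 < n) : Fin n := ⟨1, hn⟩

def u0 : Fin n → S G n := fun _ => S.num 0

def cnum (m : ℕ) : ℕ := if m = 0 then 2 else if m = 1 then 1 else if m = 2 then 3 else m + 1

def constOut (a : Fin n → S G n) : S G n → S G n
  | S.g _ => S.tup a
  | S.tup _ => S.num 3
  | S.num m => S.num (cnum m)

def decodeOut (o : G → (Fin n → G) → G) (e : ℕ → G) : S G n → S G n → S G n
  | S.tup b, S.num m =>
      if 3 ≤ m then
        (match decode b with
         | some b' => S.g (o (e (m - 3)) b')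
         | none => S.num 1)
      else S.num 1
  | S.num ms, S.num m => if ms = 2 ∧ 3 ≤ m then S.g (e (m - 3)) else S.num 1
  | _, _ => S.num 1

open Classical in
noncomputable def gen (hn : 1 < n) (o : G → (Fin n → G) → G) (e : ℕ → G) : M G n := fun a =>
  if a = (fun _ => a (i0 hn)) then constOut a (a (i0 hn))
  else
    match decode a with
    | some _ => S.tup a
    | none => decodeOut o e (a (i0 hn)) (a (i1 hn))

open Classical in
noncomputable def emb (o : G → (Fin n → G) → G) (x : G) : M G n := fun a =>
  if a = u0 then S.g x
  else
    match decode a with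
    | some b => S.g (o x b)
    | none => S.num 1

noncomputable def zee (hn : 1 < n) (o : G → (Fin n → G) → G) (e : ℕ → G) : ℕ → M G n
  | 0 => comp (gen hn o e) (fun _ => gen hn o e)
  | k+1 => comp (gen hn o e) (fun _ => zee hn o e k)

noncomputable def term (hn : 1 < n) (o : G → (Fin n → G) → G) (e : ℕ → G) (k : ℕ) : M G n :=
  comp (gen hn o e) (fun i => if i = i0 hn then gen hn o e else zee hn o e k)

/-! ### decode lemmas -/

theorem decode_gs (b : Fin n → G) : decode (n := n) (fun i => S.g (b i)) = some b := by
  have h : ∀ i : Fin n, (gpart (S.g (b i) : S G n)).isSome := by intro i; simp [gpart]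
  simp only [decode, dif_pos h]
  congr 1

theorem decode_eq_some {a : Fin n → S G n} {b : Fin n → G} (h : decode a = some b) :
    a = fun i => S.g (b i) := by
  unfold decode at h
  split at h
  · rename_i hall
    funext i
    have hi := congrFun (Option.some.inj h) i
    have hs := hall i
    cases ha : a i with
    | g x =>
        have hg : gpart (a i) = some x := by rw [ha]; rfl
        congr 1
        rw [← hi]
        simp [hg]
    | num k => rw [ha] at hs; simp [gpart] at hs
    | tup c => rw [ha] at hs; simp [gpart] at hs
  · exact absurd h (by simp)

theorem decode_none {a : Fin n → S G n} (i : Fin n) (h : gpart (a i) = none) :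
    decode a = none := by
  unfold decode
  rw [dif_neg]
  intro hall
  have := hall i
  rw [h] at this
  simp at this

/-! ### cnum lemmas -/

theorem cnum_zero : cnum 0 = 2 := rfl
theorem cnum_one : cnum 1 = 1 := rfl
theorem cnum_two : cnum 2 = 3 := rfl
theorem cnum_add3 (j : ℕ) : cnum (j + 3) = j + 4 := by
  unfold cnum
  rw [if_neg (by omega), if_neg (by omega), if_neg (by omega)]

theorem cnum_ne_zero (m : ℕ) : cnum m ≠ 0 := by unfold cnum; split_ifs <;> omega
theorem cnum_eq_two {m : ℕ} (h : cnum m = 2) : m = 0 := by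
  unfold cnum at h; split_ifs at h <;> omega

variable (hn : 1 < n) (o : G → (Fin n → G) → G) (e : ℕ → G)

/-! ### decodeOut lemmas -/

theorem decodeOut_cases (s t : S G n) :
    decodeOut o e s t = S.num 1 ∨ ∃ x, decodeOut o e s t = S.g x := by
  cases s with
  | g x => cases t <;> simp [decodeOut]
  | num ms =>
      cases t with
      | g x => simp [decodeOut]
      | tup c => simp [decodeOut]
      | num m =>
          simp only [decodeOut]
          split_ifs <;> simp
  | tup b =>
      cases t with
      | g x => simp [decodeOut]
      | tup c => simp [decodeOut]
      | num m =>
          simp only [decodeOut]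
          split_ifs with h
          · cases hb : decode b <;> simp
          · simp

/-! ### gen evaluation lemmas -/

theorem gen_const (s : S G n) : gen hn o e (fun _ => s) = constOut (fun _ => s) s := by
  unfold gen
  rw [if_pos rfl]

theorem ne_const_of {a : Fin n → S G n} (h : a (i1 hn) ≠ a (i0 hn)) :
    ¬ a = fun _ => a (i0 hn) := fun he => h (congrFun he (i1 hn))

theorem gen_of_decode_some {a : Fin n → S G n} {b : Fin n → G} (hd : decode a = some b) :
    gen hn o e a = S.tup a := by
  have ha := decode_eq_some hd
  by_cases hc : a = fun _ => a (i0 hn)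
  · unfold gen
    rw [if_pos hc]
    have h0 : a (i0 hn) = S.g (b (i0 hn)) := congrFun ha _
    rw [h0]
    rfl
  · unfold gen
    rw [if_neg hc, hd]

theorem gen_of_decode_none {a : Fin n → S G n} (hc : ¬ a = fun _ => a (i0 hn))
    (hd : decode a = none) :
    gen hn o e a = decodeOut o e (a (i0 hn)) (a (i1 hn)) := by
  unfold gen
  rw [if_neg hc, hd]

/-! ### gen output classification -/

theorem gen_ne_num0 (a : Fin n → S G n) : gen hn o e a ≠ S.num 0 := by
  by_cases hc : a = fun _ => a (i0 hn)
  · unfold gen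
    rw [if_pos hc]
    cases a (i0 hn) with
    | g x => simp [constOut]
    | tup c => simp [constOut]
    | num m => simp [constOut, cnum_ne_zero]
  · cases hd : decode a with
    | some b => rw [gen_of_decode_some hn o e hd]; simp
    | none =>
        rw [gen_of_decode_none hn o e hc hd]
        rcases decodeOut_cases o e (a (i0 hn)) (a (i1 hn)) with h | ⟨x, h⟩ <;> rw [h] <;> simp

theorem gen_eq_num2 {a : Fin n → S G n} (h : gen hn o e a = S.num 2) : a = u0 := by
  by_cases hc : a = fun _ => a (i0 hn)
  · unfold gen at h
    rw [if_pos hc] at h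
    cases h0 : a (i0 hn) with
    | g x => rw [h0] at h; simp [constOut] at h
    | tup c => rw [h0] at h; simp [constOut] at h
    | num m =>
        rw [h0] at h
        simp only [constOut, S.num.injEq] at h
        have := cnum_eq_two h
        subst this
        rw [hc, h0]
        rfl
  · cases hd : decode a with
    | some b => rw [gen_of_decode_some hn o e hd] at h; simp at h
    | none =>
        rw [gen_of_decode_none hn o e hc hd] at h
        rcases decodeOut_cases o e (a (i0 hn)) (a (i1 hn)) with h' | ⟨x, h'⟩ <;>
          rw [h'] at h <;> simp at h

theorem gen_eq_tup {a : Fin n → S G n} {c : Fin n → S G n} (h : gen hn o e a = S.tup c) :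
    ∃ b, decode a = some b := by
  cases hd : decode a with
  | some b => exact ⟨b, rfl⟩
  | none =>
      exfalso
      by_cases hc : a = fun _ => a (i0 hn)
      · unfold gen at h
        rw [if_pos hc] at h
        cases h0 : a (i0 hn) with
        | g x =>
            have : a = fun _ => S.g x := by rw [hc, h0]
            rw [this, decode_gs (fun _ => x)] at hd
            simp at hd
        | tup c' => rw [h0] at h; simp [constOut] at h
        | num m => rw [h0] at h; simp [constOut] at h
      · rw [gen_of_decode_none hn o e hc hd] at h
        rcases decodeOut_cases o e (a (i0 hn)) (a (i1 hn)) with h' | ⟨x, h'⟩ <;>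
          rw [h'] at h <;> simp at h

/-! ### zee chain lemmas -/

theorem zee_zero_val (a : Fin n → S G n) :
    zee hn o e 0 a = gen hn o e (fun _ => gen hn o e a) := rfl

theorem zee_succ_val (k : ℕ) (a : Fin n → S G n) :
    zee hn o e (k+1) a = gen hn o e (fun _ => zee hn o e k a) := rfl

theorem gen_const_num (m : ℕ) :
    gen hn o e (fun _ => (S.num m : S G n)) = S.num (cnum m) := by
  rw [gen_const]; rfl

theorem gen_const_tup (c : Fin n → S G n) :
    gen hn o e (fun _ => S.tup c) = S.num 3 := by
  rw [gen_const]; rfl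

theorem gen_const_g (x : G) :
    gen hn o e (fun _ => (S.g x : S G n)) = S.tup (fun _ => S.g x) := by
  rw [gen_const]; rfl

theorem zee_of_num3 {a : Fin n → S G n} {j : ℕ} (h : gen hn o e a = S.num (j + 3)) :
    ∀ k, zee hn o e k a = S.num (j + k + 4) := by
  intro k
  induction k with
  | zero => rw [zee_zero_val, h, gen_const_num, cnum_add3]
  | succ k ih =>
      rw [zee_succ_val, ih]
      have : j + k + 4 = (j + k + 1) + 3 := by omega
      rw [this, gen_const_num, cnum_add3]
      congr 1

theorem zee_of_num2 {a : Fin n → S G n} (h : gen hn o e a = S.num 2) :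
    ∀ k, zee hn o e k a = S.num (k + 3) := by
  intro k
  induction k with
  | zero => rw [zee_zero_val, h, gen_const_num, cnum_two]
  | succ k ih =>
      rw [zee_succ_val, ih, gen_const_num, cnum_add3]

theorem zee_of_num1 {a : Fin n → S G n} (h : gen hn o e a = S.num 1) :
    ∀ k, zee hn o e k a = S.num 1 := by
  intro k
  induction k with
  | zero => rw [zee_zero_val, h, gen_const_num, cnum_one]
  | succ k ih => rw [zee_succ_val, ih, gen_const_num, cnum_one]

theorem zee_of_tup {a : Fin n → S G n} {c : Fin n → S G n} (h : gen hn o e a = S.tup c) :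
    ∀ k, zee hn o e k a = S.num (k + 3) := by
  intro k
  induction k with
  | zero => rw [zee_zero_val, h, gen_const_tup]
  | succ k ih => rw [zee_succ_val, ih, gen_const_num, cnum_add3]

theorem zee_of_g_zero {a : Fin n → S G n} {x : G} (h : gen hn o e a = S.g x) :
    zee hn o e 0 a = S.tup (fun _ => S.g x) := by
  rw [zee_zero_val, h, gen_const_g]

theorem zee_of_g_succ {a : Fin n → S G n} {x : G} (h : gen hn o e a = S.g x) :
    ∀ k, zee hn o e (k+1) a = S.num (k + 3) := by
  intro k
  induction k with
  | zero => rw [zee_succ_val, zee_of_g_zero hn o e h, gen_const_tup]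
  | succ k ih => rw [zee_succ_val, ih, gen_const_num, cnum_add3]

/-! ### dvec -/

theorem i1_ne_i0 : i1 hn ≠ i0 hn := by
  simp [i0, i1, Fin.ext_iff]

def dvec (s t : S G n) : Fin n → S G n := fun i => if i = i0 hn then s else t

theorem dvec_i0 (s t : S G n) : dvec hn s t (i0 hn) = s := if_pos rfl

theorem dvec_i1 (s t : S G n) : dvec hn s t (i1 hn) = t := if_neg (i1_ne_i0 hn)

theorem term_val (k : ℕ) (a : Fin n → S G n) :
    term hn o e k a = gen hn o e (dvec hn (gen hn o e a) (zee hn o e k a)) := by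
  unfold term comp dvec
  congr 1
  funext i
  by_cases h : i = i0 hn <;> simp [h]

theorem gen_dvec_of_ne {s t : S G n} (hne : t ≠ s)
    (hgp : gpart s = none ∨ gpart t = none) :
    gen hn o e (dvec hn s t) = decodeOut o e s t := by
  have hc : ¬ dvec hn s t = fun _ => dvec hn s t (i0 hn) := by
    apply ne_const_of hn
    rw [dvec_i1, dvec_i0]
    exact hne
  have hd : decode (dvec hn s t) = none := by
    rcases hgp with h | h
    · exact decode_none (i0 hn) (by rw [dvec_i0]; exact h)
    · exact decode_none (i1 hn) (by rw [dvec_i1]; exact h)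
  rw [gen_of_decode_none hn o e hc hd, dvec_i0, dvec_i1]

/-! ### emb lemmas -/

theorem emb_u0 (x : G) : emb o x u0 = S.g x := by
  unfold emb
  rw [if_pos rfl]

theorem emb_some (x : G) {a : Fin n → S G n} {b : Fin n → G} (ha : a ≠ u0)
    (hd : decode a = some b) : emb o x a = S.g (o x b) := by
  unfold emb
  rw [if_neg ha, hd]

theorem emb_none (x : G) {a : Fin n → S G n} (ha : a ≠ u0)
    (hd : decode a = none) : emb o x a = S.num 1 := by
  unfold emb
  rw [if_neg ha, hd]

theorem gs_ne_u0 (hn : 1 < n) (b : Fin n → G) : (fun i => (S.g (b i) : S G n)) ≠ u0 := by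
  intro h
  have := congrFun h (i0 hn)
  simp [u0] at this

theorem const_num_ne_u0 (hn : 1 < n) {m : ℕ} (hm : m ≠ 0) : (fun _ : Fin n => (S.num m : S G n)) ≠ u0 := by
  intro h
  have := congrFun h (i0 hn)
  simp [u0] at this
  omega

theorem emb_hom (hn : 1 < n) (hsa : Superassociative o) (x : G) (y : Fin n → G) :
    emb o (o x y) = comp (emb o x) (fun i => emb o (y i)) := by
  funext a
  by_cases ha : a = u0
  · subst ha
    rw [emb_u0]
    show S.g (o x y) = emb o x (fun i => emb o (y i) u0)
    have h1 : (fun i => emb o (y i) u0) = fun i => (S.g (y i) : S G n) := by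
      funext i; rw [emb_u0]
    rw [h1, emb_some o x (gs_ne_u0 hn y) (decode_gs y)]
  · cases hd : decode a with
    | some b =>
        rw [emb_some o (o x y) ha hd]
        show _ = emb o x (fun i => emb o (y i) a)
        have h1 : (fun i => emb o (y i) a) = fun i => (S.g (o (y i) b) : S G n) := by
          funext i; rw [emb_some o (y i) ha hd]
        rw [h1, emb_some o x (gs_ne_u0 hn _) (decode_gs _), hsa]
    | none =>
        rw [emb_none o (o x y) ha hd]
        show _ = emb o x (fun i => emb o (y i) a)
        have h1 : (fun i => emb o (y i) a) = fun _ => (S.num 1 : S G n) := by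
          funext i; rw [emb_none o (y i) ha hd]
        rw [h1, emb_none o x (const_num_ne_u0 hn one_ne_zero)
          (decode_none (i0 hn) rfl)]

theorem emb_inj : Function.Injective (emb (n := n) o) := by
  intro x y h
  have := congrFun h u0
  rw [emb_u0, emb_u0] at this
  exact S.g.inj this

/-! ### the key computation -/

theorem u0_eq : (u0 : Fin n → S G n) = fun _ => S.num 0 := rfl

theorem term_eq_emb (k : ℕ) : term hn o e k = emb o (e k) := by
  funext a
  rw [term_val]
  by_cases ha : a = u0
  · -- case a = u0
    subst ha
    have hg : gen hn o e u0 = S.num 2 := by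
      rw [u0_eq, gen_const_num]; rfl
    have hz : zee hn o e k u0 = S.num (k + 3) := zee_of_num2 hn o e hg k
    rw [hg, hz]
    rw [gen_dvec_of_ne hn o e (s := S.num 2) (t := S.num (k+3))
      (by simp only [ne_eq, S.num.injEq]; omega) (Or.inl rfl)]
    have hred : decodeOut o e (S.num 2 : S G n) (S.num (k+3)) =
        if (2 = 2 ∧ 3 ≤ k + 3) then S.g (e (k + 3 - 3)) else S.num 1 := rfl
    rw [hred, if_pos ⟨rfl, by omega⟩, emb_u0]
    rfl
  · cases hd : decode a with
    | some b =>
        have hg := gen_of_decode_some hn o e hd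
        have hz : zee hn o e k a = S.num (k + 3) := zee_of_tup hn o e hg k
        rw [hg, hz]
        rw [gen_dvec_of_ne hn o e (s := S.tup a) (t := S.num (k+3))
          (by simp) (Or.inl rfl)]
        have hred : decodeOut o e (S.tup a) (S.num (k+3)) =
            if 3 ≤ k + 3 then
              (match decode a with
               | some b' => S.g (o (e (k + 3 - 3)) b')
               | none => S.num 1) else S.num 1 := rfl
        rw [hred, if_pos (by omega), hd, emb_some o (e k) ha hd]
        rfl
    | none =>
        rw [emb_none o (e k) ha hd]
        cases hg : gen hn o e a with
        | g x =>
            cases k with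
            | zero =>
                rw [zee_of_g_zero hn o e hg]
                rw [gen_dvec_of_ne hn o e (s := S.g x) (t := S.tup (fun _ => S.g x))
                  (by simp) (Or.inr rfl)]
                rfl
            | succ k =>
                rw [zee_of_g_succ hn o e hg k]
                rw [gen_dvec_of_ne hn o e (s := S.g x) (t := S.num (k+3))
                  (by simp) (Or.inr rfl)]
                rfl
        | num m =>
            rcases m with _ | (_ | (_ | j))
            · exact absurd hg (gen_ne_num0 hn o e a)
            · have hz : zee hn o e k a = S.num 1 := zee_of_num1 hn o e hg k
              have hdv : dvec hn (S.num (0+1) : S G n) (S.num 1) = fun _ => S.num 1 := by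
                funext i
                unfold dvec
                split <;> rfl
              rw [hz, hdv, gen_const_num]
              rfl
            · exact absurd (gen_eq_num2 hn o e hg) ha
            · have hz : zee hn o e k a = S.num (j + k + 4) := zee_of_num3 hn o e hg k
              rw [show j + 1 + 1 + 1 = j + 3 from by omega, hz]
              rw [gen_dvec_of_ne hn o e (s := S.num (j+3)) (t := S.num (j+k+4))
                (by simp only [ne_eq, S.num.injEq]; omega) (Or.inl rfl)]
              have hred : decodeOut o e (S.num (j+3) : S G n) (S.num (j+k+4)) =
                  if (j + 3 = 2 ∧ 3 ≤ j + k + 4) then S.g (e (j + k + 4 - 3))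
                  else S.num 1 := rfl
              rw [hred, if_neg (by omega)]
        | tup c =>
            obtain ⟨b, hb⟩ := gen_eq_tup hn o e hg
            rw [hb] at hd
            exact absurd hd (by simp)

/-! ### closure generated by one element -/

inductive Cl (f : M G n) : M G n → Prop
  | base : Cl f f
  | op (x : M G n) (y : Fin n → M G n) : Cl f x → (∀ i, Cl f (y i)) → Cl f (comp x y)

theorem zee_mem (k : ℕ) : Cl (gen hn o e) (zee hn o e k) := by
  induction k with
  | zero => exact Cl.op _ _ Cl.base (fun _ => Cl.base)
  | succ k ih => exact Cl.op _ _ Cl.base (fun _ => ih)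

theorem term_mem (k : ℕ) : Cl (gen hn o e) (term hn o e k) := by
  refine Cl.op _ _ Cl.base (fun i => ?_)
  by_cases h : i = i0 hn
  · rw [if_pos h]; exact Cl.base
  · rw [if_neg h]; exact zee_mem hn o e k

theorem emb_mem (he : Function.Surjective e) (x : G) : Cl (gen hn o e) (emb o x) := by
  obtain ⟨k, hk⟩ := he x
  rw [← hk, ← term_eq_emb hn o e k]
  exact term_mem hn o e k

theorem comp_superassoc : Superassociative (comp (G := G) (n := n)) :=
  fun _ _ _ => rfl

end HennoAux

/-- **Henno's theorem.** Every finite or countable Menger algebra of rank `n > 1`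
can be isomorphically embedded into a Menger algebra of the same rank generated
by a single element. -/
theorem henno_single_generator {G : Type u} {n : ℕ} [Countable G] (hn : 1 < n)
    (o : G → (Fin n → G) → G) (hsa : Superassociative o) :
    ∃ (H : Type u) (o' : H → (Fin n → H) → H),
      Superassociative o' ∧
      (∃ ι : G → H, Function.Injective ι ∧
        ∀ (x : G) (y : Fin n → G), ι (o x y) = o' (ι x) (fun i => ι (y i))) ∧
      (∃ h : H, ∀ S : Set H, h ∈ S →
        (∀ (x : H) (y : Fin n → H), x ∈ S → (∀ i, y i ∈ S) → o' x y ∈ S) →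
        S = Set.univ) := by
  cases isEmpty_or_nonempty G with
  | inl hE =>
      refine ⟨PUnit, fun _ _ => PUnit.unit, fun _ _ _ => rfl,
        ⟨fun g => isEmptyElim g, fun a b _ => isEmptyElim a, fun x => isEmptyElim x⟩,
        ⟨PUnit.unit, ?_⟩⟩
      intro S hS _
      ext u
      simp only [Set.mem_univ, iff_true]
      cases u
      exact hS
  | inr hN =>
      obtain ⟨e, he⟩ := exists_surjective_nat G
      refine ⟨{x : HennoAux.M G n // HennoAux.Cl (HennoAux.gen hn o e) x},
        fun x y => ⟨HennoAux.comp x.1 (fun i => (y i).1),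
          HennoAux.Cl.op _ _ x.2 (fun i => (y i).2)⟩,
        fun _ _ _ => rfl,
        ⟨fun g => ⟨HennoAux.emb o g, HennoAux.emb_mem hn o e he g⟩, ?_, ?_⟩,
        ⟨⟨HennoAux.gen hn o e, HennoAux.Cl.base⟩, ?_⟩⟩
      · intro a b hab
        exact HennoAux.emb_inj o (congrArg Subtype.val hab)
      · intro x y
        apply Subtype.ext
        exact HennoAux.emb_hom o hn hsa x y
      · intro Sset hS hcl
        ext u
        simp only [Set.mem_univ, iff_true]
        obtain ⟨x, hx⟩ := u
        have key : ∀ x, HennoAux.Cl (HennoAux.gen hn o e) x →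
            ∀ h : HennoAux.Cl (HennoAux.gen hn o e) x, (⟨x, h⟩ : _) ∈ Sset := by
          intro x hx
          induction hx with
          | base => intro h; exact hS
          | op x y hx hy ihx ihy =>
              intro h
              exact hcl ⟨x, hx⟩ (fun i => ⟨y i, hy i⟩) (ihx hx) (fun i => ihy i (hy i))
        exact key x hx hx
end

section
/- Let (G;o) be a Menger algebra of rank n. The binary comitant (Gⁿ;∗) is a group if and only if either n = 1 and G with the binary operation x·y = o(x,y) is a group, or G is a singleton (has exactly one element) (Schein's theorem). -/
universe u

/-- The operation of the binary comitant:
`(x₁,…,xₙ) ∗ (y₁,…,yₙ) = (x₁[y₁…yₙ],…,xₙ[y₁…yₙ])`. -/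
def comitantMul {G : Type u} {n : ℕ} (o : G → (Fin n → G) → G)
    (x y : Fin n → G) : Fin n → G :=
  fun i => o (x i) y

/-- **Schein's theorem.** The binary comitant of a Menger algebra `(G;o)` of
rank `n` is a group if and only if the algebra is of rank `1` and is a group,
or the algebra is a singleton. -/
theorem comitant_group_iff {G : Type u} {n : ℕ} (hn : 1 ≤ n)
    (o : G → (Fin n → G) → G) (hsa : Superassociative o) :
    (∃ e : Fin n → G,
        (∀ a : Fin n → G, comitantMul o e a = a ∧ comitantMul o a e = a) ∧
        (∀ a : Fin n → G, ∃ b : Fin n → G,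
          comitantMul o a b = e ∧ comitantMul o b a = e)) ↔
    ((n = 1 ∧
        ∃ e : G, (∀ x : G, o e (fun _ => x) = x ∧ o x (fun _ => e) = x) ∧
          (∀ x : G, ∃ y : G, o x (fun _ => y) = e ∧ o y (fun _ => x) = e)) ∨
      (∃ g : G, ∀ x : G, x = g)) := by
  constructor
  · rintro ⟨e, hid, hinv⟩
    rcases eq_or_lt_of_le hn with h1 | h2
    · -- n = 1 : extract a group structure on G
      left
      have hn1 : n = 1 := h1.symm
      subst hn1
      refine ⟨rfl, e 0, ?_, ?_⟩
      · intro x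
        have he : e = fun _ => e 0 := funext fun i => by rw [Subsingleton.elim i 0]
        constructor
        · have := congrFun (hid (fun _ => x)).1 0
          simpa [comitantMul] using this
        · have := congrFun (hid (fun _ => x)).2 0
          simp only [comitantMul] at this
          rw [he] at this
          exact this
      · intro x
        obtain ⟨b, hb1, hb2⟩ := hinv (fun _ => x)
        have hbb : b = fun _ => b 0 := funext fun i => by rw [Subsingleton.elim i 0]
        refine ⟨b 0, ?_, ?_⟩
        · have := congrFun hb1 0
          simp only [comitantMul] at this
          rw [hbb] at this
          exact this
        · have := congrFun hb2 0
          simpa [comitantMul] using this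
    · -- n ≥ 2 : G is a singleton
      right
      have h2' : 2 ≤ n := h2
      set i0 : Fin n := ⟨0, by omega⟩ with hi0
      set i1 : Fin n := ⟨1, by omega⟩ with hi1
      obtain ⟨b, hcb, -⟩ := hinv (fun _ => e i0)
      -- e is constant
      have he : ∀ i, e i = o (e i0) b := fun i => (congrFun hcb i).symm
      -- left identity componentwise
      have hl : ∀ (a : Fin n → G) (i : Fin n), o (e i) a = a i :=
        fun a i => congrFun (hid a).1 i
      have key : ∀ x y : G, x = y := by
        intro x y
        have hne : i1 ≠ i0 := by
          simp [hi0, hi1, Fin.ext_iff]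
        set a : Fin n → G := fun k => if k = i0 then x else y with ha
        have h0 : a i0 = x := by simp [ha]
        have h1 : a i1 = y := by simp [ha, hne]
        have e0 : o (e i0) a = a i0 := hl a i0
        have e1 : o (e i1) a = a i1 := hl a i1
        rw [he i0] at e0
        rw [he i1] at e1
        rw [← h0, ← h1, ← e0, ← e1]
      exact ⟨e i0, fun x => key x (e i0)⟩
  · rintro (⟨hn1, e, hid, hinv⟩ | ⟨g, hg⟩)
    · -- n = 1, G a group
      subst hn1
      refine ⟨fun _ => e, fun a => ⟨?_, ?_⟩, fun a => ?_⟩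
      · funext i
        have ha : a = fun _ => a i := funext fun j => by rw [Subsingleton.elim j i]
        show o e a = a i
        rw [ha]
        exact (hid (a i)).1
      · funext i
        exact (hid (a i)).2
      · obtain ⟨y, hy1, hy2⟩ := hinv (a 0)
        have ha : a = fun _ => a 0 := funext fun j => by rw [Subsingleton.elim j 0]
        refine ⟨fun _ => y, ?_, ?_⟩
        · funext i
          show o (a i) (fun _ => y) = e
          rw [Subsingleton.elim i (0 : Fin 1)]
          exact hy1
        · funext i
          show o y a = e
          rw [ha]
          exact hy2
    · -- singleton case
      have key : ∀ x y : G, x = y := fun x y => (hg x).trans (hg y).symm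
      exact ⟨fun _ => g, fun a => ⟨funext fun i => key _ _, funext fun i => key _ _⟩,
        fun a => ⟨fun _ => g, funext fun i => key _ _, funext fun i => key _ _⟩⟩
end
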